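/- Let G be a k-uniform hypergraph with a vertex u of maximum degree Δ ≥ 1, let v be a neighbor of u of maximum degree δ among neighbors of u, and let γ be the number of edges containing both u and v. Then ρ(G) ≥ ((Δ + δ − 2γ + γ² + √((Δ−δ)² + γ⁴ + 2(Δ+δ−2γ)γ²))/2)^{1/k}. -/

import Mathlib

/-- The spectral radius of an order-`k` tensor of dimension `n`: the largest modulus of its
(complex) eigenvalues, where `ρ` is an eigenvalue if `T x = ρ x^{[k-1]}` for some `x ≠ 0`. -/
noncomputable def specRad (n k : ℕ) (T : Fin n → (Fin (k-1) → Fin n) → ℝ) : ℝ :=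
  sSup {r : ℝ | ∃ ρ : ℂ, ‖ρ‖ = r ∧ ∃ x : Fin n → ℂ, x ≠ 0 ∧
    ∀ i, (∑ f : Fin (k-1) → Fin n, (T i f : ℂ) * ∏ a, x (f a)) = ρ * x i ^ (k-1)}

/-- A hypergraph on vertex set `Fin n` is a finite set of edges; `hDeg` is the degree of
vertex `i`, the number of edges containing `i`. -/
def hDeg (n : ℕ) (E : Finset (Finset (Fin n))) (i : Fin n) : ℕ :=
  (E.filter (fun e => i ∈ e)).card

/-- The average 2-degree of vertex `i` in a `k`-uniform hypergraph:
`m_i = (Σ_{{i,i₂,…,i_k} ∈ E_i} d_{i₂} ⋯ d_{i_k}) / d_i^{k-1}`. -/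
noncomputable def avg2 (n k : ℕ) (E : Finset (Finset (Fin n))) (i : Fin n) : ℝ :=
  (∑ e ∈ E.filter (fun e => i ∈ e), ∏ j ∈ e.erase i, (hDeg n E j : ℝ)) /
    (hDeg n E i : ℝ) ^ (k-1)

/-- The adjacency tensor of a `k`-uniform hypergraph: entry `1/(k-1)!` at `(i₁,…,i_k)` when
`{i₁,…,i_k}` is an edge, and `0` otherwise. -/
noncomputable def adjT (n k : ℕ) (E : Finset (Finset (Fin n))) :
    Fin n → (Fin (k-1) → Fin n) → ℝ :=
  fun i f => if insert i (Finset.image f Finset.univ) ∈ E then 1 / (k-1).factorial else 0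

/-- The signless Laplacian tensor `Q(G) = D(G) + A(G)`. -/
noncomputable def qT (n k : ℕ) (E : Finset (Finset (Fin n))) :
    Fin n → (Fin (k-1) → Fin n) → ℝ :=
  fun i f => (if ∀ a, f a = i then (hDeg n E i : ℝ) else 0) + adjT n k E i f

/-- A hypergraph is connected if every pair of distinct vertices is joined by a sequence of
pairwise intersecting edges. -/
def HConn (n : ℕ) (E : Finset (Finset (Fin n))) : Prop :=
  ∀ u v : Fin n, u ≠ v → ∃ r : ℕ, ∃ es : Fin (r+1) → Finset (Fin n),
    (∀ s, es s ∈ E) ∧ u ∈ es 0 ∧ v ∈ es (Fin.last r) ∧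
    ∀ s : Fin r, (es s.castSucc ∩ es s.succ).Nonempty

/-!
The bound comes from a Collatz–Wielandt argument. If `y ≥ 0`, `y ≠ 0` and
`λ y_i^{k-1} ≤ (A y^{k-1})_i` for every `i`, then Euler's identity
`Σ_i y_i (A y^{k-1})_i = k Σ_e Π_{j ∈ e} y_j` and the variational characterization give
`λ ≤ k max_{‖x‖_k = 1} Σ_e Π_{j ∈ e} x_j`; by the Lagrange condition the maximizer is an
eigenvector for this value, so `λ ≤ ρ(G)`.

For `y` we take the Perron vector of the hypergraph in which the `Δ - γ` edges through `u` only,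
the `γ` edges through `u` and `v`, and the `δ - γ` edges through `v` only meet just in `u` and
`v`. With `t = λ^k` and `q^k = (t - Δ + γ) / (γ t)`, put `y_u = 1`, `y_v = λ q²`, and give the
other vertices of the three kinds of edges the values `λ⁻¹`, `q`, `q²` (the largest of them when
a vertex lies on edges of several kinds). The inequalities at these vertices then hold, and those
at `u` and `v` both reduce to `(t - Δ + γ) (t - δ + γ) = γ² t`, whose largest root is the bound.
-/

open Finset

lemma insert_eq_iff_eq_erase {α : Type*} [DecidableEq α] {s e : Finset α} {i : α}
    (hi : i ∈ e) (hs : #s < #e) : insert i s = e ↔ s = e.erase i := by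
  refine ⟨fun h => ?_, fun h => h ▸ insert_erase hi⟩
  have his : i ∉ s := fun his => hs.ne (by rw [← h, insert_eq_of_mem his])
  rw [← h, erase_insert his]

lemma card_filter_image_eq {α : Type*} [Fintype α] [DecidableEq α] {m : ℕ} {s : Finset α}
    (hs : #s = m) : #{f : Fin m → α | image f univ = s} = m.factorial := by
  have hcard : Fintype.card s = m := by simp [hs]
  let e : {f : Fin m → α // image f univ = s} ≃ (Fin m ≃ s) :=
    { toFun := fun f => Equiv.ofBijective
        (fun a => ⟨f.1 a, by simpa [f.2] using mem_image_of_mem f.1 (mem_univ a)⟩) <| by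
          rw [Fintype.bijective_iff_surjective_and_card]
          refine ⟨fun ⟨b, hb⟩ => ?_, by simp [hcard]⟩
          rw [← f.2] at hb
          obtain ⟨a, -, rfl⟩ := mem_image.1 hb
          exact ⟨a, rfl⟩
      invFun := fun σ => ⟨fun a => σ a, by
        ext b
        simp only [mem_image, mem_univ, true_and]
        exact ⟨by rintro ⟨a, rfl⟩; exact (σ a).2, fun hb => ⟨σ.symm ⟨b, hb⟩, by simp⟩⟩⟩
      left_inv := fun f => rfl
      right_inv := fun σ => by ext; rfl }
  rw [← Fintype.card_subtype, Fintype.card_congr e,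
    Fintype.card_equiv (Fintype.equivFinOfCardEq hcard).symm, Fintype.card_fin]

lemma prod_mul_pow_card_sdiff_le_prod {ι : Type*} [DecidableEq ι] {s t : Finset ι} {y : ι → ℝ}
    {c : ℝ} (hts : t ⊆ s) (hc : 0 ≤ c) (hy : ∀ j ∈ t, 0 ≤ y j) (hcy : ∀ j ∈ s \ t, c ≤ y j) :
    (∏ j ∈ t, y j) * c ^ #(s \ t) ≤ ∏ j ∈ s, y j := by
  rw [← prod_sdiff hts, mul_comm]
  refine mul_le_mul_of_nonneg_right ?_ (prod_nonneg hy)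
  calc c ^ #(s \ t) = ∏ _j ∈ s \ t, c := (prod_const c).symm
    _ ≤ ∏ j ∈ s \ t, y j := prod_le_prod (fun _ _ => hc) hcy

lemma sub_mul_sub_eq_and_lt_of_eq_root {A B g t : ℝ} (hA : 0 ≤ A) (hB : 0 ≤ B) (hg : 0 < g)
    (ht : t = (A + B + g ^ 2 + √((A - B) ^ 2 + g ^ 4 + 2 * (A + B) * g ^ 2)) / 2) :
    (t - A) * (t - B) = g ^ 2 * t ∧ A < t := by
  set D := (A - B) ^ 2 + g ^ 4 + 2 * (A + B) * g ^ 2 with hD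
  have hD' : D = (A - B - g ^ 2) ^ 2 + 4 * A * g ^ 2 := by rw [hD]; ring
  have hsq : √D ^ 2 = D := Real.sq_sqrt (by rw [hD']; positivity)
  refine ⟨by subst ht; linear_combination (1 / 4 : ℝ) * hsq, ?_⟩
  have hroot : A - B - g ^ 2 < √D := by
    rcases lt_or_ge (A - B - g ^ 2) 0 with h | h
    · exact h.trans_le (Real.sqrt_nonneg D)
    · rw [Real.lt_sqrt h, hD']
      have : 0 < A * g ^ 2 := mul_pos (by nlinarith) (by positivity)
      linarith
  rw [ht]
  linarith

section

variable {n k : ℕ} {E : Finset (Finset (Fin n))}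

lemma eq_of_isMinOn_mul_pow_sub_mul {M S x₀ : ℝ} (hk : 2 ≤ k) (hx₀ : 0 ≤ x₀) (hS : 0 ≤ S)
    (hmin : IsMinOn (fun t => M * t ^ k - S * t) (Set.Ici 0) x₀) :
    S = k * M * x₀ ^ (k - 1) := by
  rcases hx₀.eq_or_lt with rfl | hx₀
  · have hlim : Filter.Tendsto (fun t : ℝ => M * t ^ (k - 1)) (nhdsWithin 0 (Set.Ioi 0))
        (nhds 0) := by
      have := (by fun_prop : Continuous fun t : ℝ => M * t ^ (k - 1)).tendsto 0
      rw [zero_pow (by omega), mul_zero] at this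
      exact this.mono_left nhdsWithin_le_nhds
    have hS0 : S ≤ 0 := ge_of_tendsto hlim <| eventually_nhdsWithin_of_forall fun t ht => by
      have h := isMinOn_iff.1 hmin t (Set.mem_Ici.2 (le_of_lt ht))
      have htk : t ^ k = t ^ (k - 1) * t := by rw [← pow_succ, Nat.sub_add_cancel (by omega)]
      rw [zero_pow (by omega), htk] at h
      exact le_of_mul_le_mul_right (by linarith) (Set.mem_Ioi.1 ht)
    rw [le_antisymm hS0 hS, zero_pow (by omega), mul_zero]
  · have hderiv : HasDerivAt (fun t => M * t ^ k - S * t) (M * (k * x₀ ^ (k - 1)) - S) x₀ :=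
      ((hasDerivAt_pow k x₀).const_mul M).sub (by simpa using (hasDerivAt_id x₀).const_mul S)
    have := (hmin.isLocalMin (Ici_mem_nhds hx₀)).hasDerivAt_eq_zero hderiv
    linarith

lemma isCompact_nonneg_sum_pow_eq_one (hk : k ≠ 0) :
    IsCompact {x : Fin n → ℝ | 0 ≤ x ∧ ∑ i, x i ^ k = 1} := by
  refine (isCompact_Icc (a := (0 : Fin n → ℝ)) (b := 1)).of_isClosed_subset
    ((isClosed_le continuous_const continuous_id).inter
      (isClosed_eq (by fun_prop) continuous_const)) fun x hx => ⟨hx.1, fun i => ?_⟩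
  have hxi : x i ^ k ≤ 1 := hx.2 ▸ single_le_sum (fun j _ => pow_nonneg (hx.1 j) k) (mem_univ i)
  exact (pow_le_one_iff_of_nonneg (hx.1 i) hk).1 hxi

/-- `k · edgeForm E x` is the value `x^T (A x)` of the adjacency form. -/
noncomputable def edgeForm (E : Finset (Finset (Fin n))) (x : Fin n → ℝ) : ℝ :=
  ∑ e ∈ E, ∏ j ∈ e, x j

/-- `linkForm E i x` is the `i`-th coordinate of `A x^{k-1}`. -/
noncomputable def linkForm (E : Finset (Finset (Fin n))) (i : Fin n) (x : Fin n → ℝ) : ℝ :=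
  ∑ e ∈ E with i ∈ e, ∏ j ∈ e.erase i, x j

lemma linkForm_nonneg {x : Fin n → ℝ} (hx : 0 ≤ x) (i : Fin n) : 0 ≤ linkForm E i x :=
  sum_nonneg fun _ _ => prod_nonneg fun j _ => hx j

lemma edgeForm_update (x : Fin n → ℝ) (i : Fin n) (t : ℝ) :
    edgeForm E (Function.update x i t) = edgeForm E x + (t - x i) * linkForm E i x := by
  have hprod : ∀ s : Finset (Fin n), i ∉ s → ∏ j ∈ s, Function.update x i t j = ∏ j ∈ s, x j :=
    fun s hs => prod_congr rfl fun j hj => Function.update_of_ne (ne_of_mem_of_not_mem hj hs) _ _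
  have hsplit : ∀ y : Fin n → ℝ, edgeForm E y =
      ∑ e ∈ E with i ∈ e, y i * ∏ j ∈ e.erase i, y j + ∑ e ∈ E with i ∉ e, ∏ j ∈ e, y j := by
    intro y
    rw [edgeForm, ← sum_filter_add_sum_filter_not E (fun e => i ∈ e)]
    congr 1
    exact sum_congr rfl fun e he => (mul_prod_erase e y (mem_filter.1 he).2).symm
  rw [hsplit, hsplit x, linkForm, Function.update_self, mul_sum,
    sum_congr rfl fun e _ => by rw [hprod _ (notMem_erase i e)],
    sum_congr rfl fun e he => hprod e (mem_filter.1 he).2]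
  simp only [sub_mul, sum_sub_distrib]
  ring

lemma edgeForm_smul (hcard : ∀ e ∈ E, #e = k) (c : ℝ) (x : Fin n → ℝ) :
    edgeForm E (c • x) = c ^ k * edgeForm E x := by
  rw [edgeForm, edgeForm, mul_sum]
  refine sum_congr rfl fun e he => ?_
  simp only [Pi.smul_apply, smul_eq_mul, prod_mul_distrib, prod_const, hcard e he]

lemma sum_mul_linkForm (hcard : ∀ e ∈ E, #e = k) (x : Fin n → ℝ) :
    ∑ i, x i * linkForm E i x = k * edgeForm E x := by
  calc ∑ i, x i * linkForm E i x = ∑ i, ∑ e ∈ E, if i ∈ e then ∏ j ∈ e, x j else 0 := by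
        refine sum_congr rfl fun i _ => ?_
        rw [linkForm, mul_sum, sum_filter]
        refine sum_congr rfl fun e _ => ?_
        split_ifs with h
        · exact mul_prod_erase e x h
        · rfl
    _ = ∑ e ∈ E, k * ∏ j ∈ e, x j := by
        rw [sum_comm]
        refine sum_congr rfl fun e he => ?_
        rw [sum_ite_mem, univ_inter, sum_const, hcard e he, nsmul_eq_mul]
    _ = k * edgeForm E x := by rw [edgeForm, mul_sum]

lemma exists_edgeForm_le_mul_sum_pow [Nonempty (Fin n)] (hk : k ≠ 0)
    (hcard : ∀ e ∈ E, #e = k) :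
    ∃ x : Fin n → ℝ, 0 ≤ x ∧ ∑ i, x i ^ k = 1 ∧
      ∀ y : Fin n → ℝ, 0 ≤ y → edgeForm E y ≤ edgeForm E x * ∑ i, y i ^ k := by
  have hne : {x : Fin n → ℝ | 0 ≤ x ∧ ∑ i, x i ^ k = 1}.Nonempty := by
    obtain ⟨i₀⟩ := ‹Nonempty (Fin n)›
    refine ⟨Pi.single i₀ 1, Pi.single_nonneg.2 zero_le_one, ?_⟩
    rw [sum_eq_single i₀ (fun j _ hj => by simp [hj, hk]) (by simp)]
    simp
  obtain ⟨x, ⟨hx, hnorm⟩, hmax⟩ := (isCompact_nonneg_sum_pow_eq_one hk).exists_isMaxOn hne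
    (by unfold edgeForm; fun_prop : Continuous (edgeForm E)).continuousOn
  refine ⟨x, hx, hnorm, fun y hy => ?_⟩
  rcases (sum_nonneg fun i _ => pow_nonneg (hy i) k : 0 ≤ ∑ i, y i ^ k).eq_or_lt with hs | hs
  · have hy0 : (0 : ℝ) • y = y := by
      ext i
      have := (sum_eq_zero_iff_of_nonneg fun j _ => pow_nonneg (hy j) k).1 hs.symm i (mem_univ i)
      simp [(pow_eq_zero_iff hk).1 this]
    rw [← hs, mul_zero, ← hy0, edgeForm_smul hcard, zero_pow hk, zero_mul]
  · set c := (∑ i, y i ^ k)⁻¹ ^ (k⁻¹ : ℝ)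
    have hck : c ^ k = (∑ i, y i ^ k)⁻¹ := Real.rpow_inv_natCast_pow (inv_nonneg.2 hs.le) hk
    have hcy : edgeForm E (c • y) ≤ edgeForm E x := hmax ⟨smul_nonneg (by positivity) hy, by
      simp only [Pi.smul_apply, smul_eq_mul, mul_pow, ← mul_sum, hck]
      exact inv_mul_cancel₀ hs.ne'⟩
    rw [edgeForm_smul hcard, hck, inv_mul_le_iff₀ hs] at hcy
    linarith

lemma linkForm_eq_of_edgeForm_le (hk : 2 ≤ k) {x : Fin n → ℝ} (hx : 0 ≤ x)
    (hnorm : ∑ i, x i ^ k = 1)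
    (hmax : ∀ y : Fin n → ℝ, 0 ≤ y → edgeForm E y ≤ edgeForm E x * ∑ i, y i ^ k) (i : Fin n) :
    linkForm E i x = k * edgeForm E x * x i ^ (k - 1) := by
  refine eq_of_isMinOn_mul_pow_sub_mul hk (hx i) (linkForm_nonneg hx i)
    (isMinOn_iff.2 fun t ht => ?_)
  have hupd : 0 ≤ Function.update x i t := fun j => by
    rcases eq_or_ne j i with rfl | hj
    · simpa using ht
    · simpa [hj] using hx j
  have hsum : ∑ j, Function.update x i t j ^ k = 1 + (t ^ k - x i ^ k) := by
    rw [← hnorm, ← add_sum_erase _ _ (mem_univ i),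
      ← add_sum_erase _ (fun j => x j ^ k) (mem_univ i), Function.update_self,
      sum_congr rfl fun j hj => by rw [Function.update_of_ne (ne_of_mem_erase hj)]]
    ring
  have h := hmax _ hupd
  rw [edgeForm_update, hsum] at h
  linarith

lemma sum_adjT_mul_prod (hk : k ≠ 0) (hcard : ∀ e ∈ E, #e = k) (i : Fin n) (y : Fin n → ℝ) :
    ∑ f : Fin (k - 1) → Fin n, adjT n k E i f * ∏ a, y (f a) = linkForm E i y := by
  have hlt : ∀ e ∈ E, ∀ f : Fin (k - 1) → Fin n, #(image f univ) < #e := fun e he f =>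
    card_image_le.trans_lt (by simp [hcard e he]; omega)
  have hfiber : ∀ e ∈ E, ∀ f : Fin (k - 1) → Fin n,
      insert i (image f univ) = e ↔ i ∈ e ∧ image f univ = e.erase i := fun e he f =>
    ⟨fun h => ⟨h ▸ mem_insert_self _ _,
        (insert_eq_iff_eq_erase (h ▸ mem_insert_self _ _) (hlt e he f)).1 h⟩,
      fun h => (insert_eq_iff_eq_erase h.1 (hlt e he f)).2 h.2⟩
  have hprod : ∀ e ∈ E, i ∈ e → ∀ f : Fin (k - 1) → Fin n, image f univ = e.erase i →
      ∏ a, y (f a) = ∏ j ∈ e.erase i, y j := fun e he hi f hf => by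
    have hinj : Set.InjOn f (univ : Finset (Fin (k - 1))) := card_image_iff.1 <| by
      rw [hf, card_erase_of_mem hi, hcard e he, card_univ, Fintype.card_fin]
    rw [← hf, prod_image hinj]
  -- each edge through `i` arises from exactly `(k - 1)!` tuples `f`
  set c : ℝ := 1 / ((k - 1).factorial : ℝ)
  calc ∑ f, adjT n k E i f * ∏ a, y (f a)
      = ∑ f with insert i (image f univ) ∈ E, c * ∏ a, y (f a) := by
        rw [sum_filter]
        refine sum_congr rfl fun f _ => ?_
        unfold adjT
        split_ifs <;> simp [c]
    _ = ∑ e ∈ E with i ∈ e, ∑ f with image f univ = e.erase i, c * ∏ j ∈ e.erase i, y j := by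
        rw [← sum_fiberwise_of_maps_to (t := E.filter (i ∈ ·)) fun f hf =>
          mem_filter.2 ⟨(mem_filter.1 hf).2, mem_insert_self _ _⟩]
        refine sum_congr rfl fun e he => ?_
        have ⟨heE, hie⟩ := mem_filter.1 he
        rw [filter_filter]
        refine sum_congr (filter_congr fun f _ => ?_) fun f hf => ?_
        · rw [hfiber e heE f]
          exact ⟨fun h => h.2.2, fun h => ⟨(hfiber e heE f).2 ⟨hie, h⟩ ▸ heE, hie, h⟩⟩
        · rw [hprod e heE hie f (mem_filter.1 hf).2]
    _ = linkForm E i y := by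
        refine sum_congr rfl fun e he => ?_
        have ⟨heE, hie⟩ := mem_filter.1 he
        rw [sum_const, card_filter_image_eq (by rw [card_erase_of_mem hie, hcard e heE]),
          nsmul_eq_mul, ← mul_assoc, mul_one_div_cancel (by positivity), one_mul]

lemma norm_le_specRad {T : Fin n → (Fin (k - 1) → Fin n) → ℝ} {ρ : ℂ} {x : Fin n → ℂ}
    (hx : x ≠ 0) (h : ∀ i, ∑ f, (T i f : ℂ) * ∏ a, x (f a) = ρ * x i ^ (k - 1)) :
    ‖ρ‖ ≤ specRad n k T := by
  refine le_csSup ⟨∑ i, ∑ f, |T i f|, ?_⟩ ⟨ρ, rfl, x, hx, h⟩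
  rintro _ ⟨ρ, rfl, x, hx, h⟩
  obtain ⟨j, hj⟩ := Function.ne_iff.1 hx
  obtain ⟨i, -, hi⟩ := exists_max_image univ (‖x ·‖) ⟨j, mem_univ j⟩
  have hxi : 0 < ‖x i‖ ^ (k - 1) := pow_pos ((norm_pos_iff.2 hj).trans_le (hi j (mem_univ j))) _
  have hρ : ‖ρ‖ * ‖x i‖ ^ (k - 1) ≤ (∑ f, |T i f|) * ‖x i‖ ^ (k - 1) := calc
    ‖ρ‖ * ‖x i‖ ^ (k - 1) = ‖∑ f, (T i f : ℂ) * ∏ a, x (f a)‖ := by rw [h i, norm_mul, norm_pow]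
    _ ≤ ∑ f, |T i f| * ‖x i‖ ^ (k - 1) := norm_sum_le_of_le _ fun f _ => by
        rw [norm_mul, Complex.norm_real, Real.norm_eq_abs, norm_prod]
        gcongr
        calc ∏ a, ‖x (f a)‖ ≤ ∏ _a : Fin (k - 1), ‖x i‖ :=
              prod_le_prod (fun _ _ => norm_nonneg _) fun a _ => hi _ (mem_univ _)
          _ = ‖x i‖ ^ (k - 1) := by simp
    _ = (∑ f, |T i f|) * ‖x i‖ ^ (k - 1) := (sum_mul ..).symm
  exact (le_of_mul_le_mul_right hρ hxi).trans <|
    single_le_sum (f := fun i => ∑ f, |T i f|) (fun _ _ => sum_nonneg fun _ _ => abs_nonneg _)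
      (mem_univ i)

lemma le_specRad_of_edgeForm_le (hk : 2 ≤ k) (hcard : ∀ e ∈ E, #e = k) {x : Fin n → ℝ}
    (hx : 0 ≤ x) (hnorm : ∑ i, x i ^ k = 1)
    (hmax : ∀ y : Fin n → ℝ, 0 ≤ y → edgeForm E y ≤ edgeForm E x * ∑ i, y i ^ k) :
    k * edgeForm E x ≤ specRad n k (adjT n k E) := by
  have hx0 : (fun i => (x i : ℂ)) ≠ 0 := fun h0 => by
    have : ∀ i, x i = 0 := fun i => by simpa using congrFun h0 i
    simp [this, zero_pow (show k ≠ 0 by omega)] at hnorm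
  have := norm_le_specRad (ρ := ((k * edgeForm E x : ℝ) : ℂ)) hx0 fun i => by
    have h := sum_adjT_mul_prod (by omega) hcard i x
    rw [linkForm_eq_of_edgeForm_le hk hx hnorm hmax i] at h
    exact_mod_cast congrArg ((↑) : ℝ → ℂ) h
  exact (le_abs_self _).trans (by simpa using this)

theorem le_specRad_of_le_linkForm (hk : 2 ≤ k) (hcard : ∀ e ∈ E, #e = k) {y : Fin n → ℝ}
    (hy : 0 ≤ y) (hy0 : y ≠ 0) {lam : ℝ} (h : ∀ i, lam * y i ^ (k - 1) ≤ linkForm E i y) :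
    lam ≤ specRad n k (adjT n k E) := by
  obtain ⟨j, hj⟩ := Function.ne_iff.1 hy0
  have : Nonempty (Fin n) := ⟨j⟩
  obtain ⟨x, hx, hnorm, hmax⟩ := exists_edgeForm_le_mul_sum_pow (by omega) hcard
  have hpos : 0 < ∑ i, y i ^ k := (pow_pos ((hy j).lt_of_ne (Ne.symm hj)) k).trans_le <|
    single_le_sum (f := fun i => y i ^ k) (fun i _ => pow_nonneg (hy i) k) (mem_univ j)
  refine (le_of_mul_le_mul_right ?_ hpos).trans (le_specRad_of_edgeForm_le hk hcard hx hnorm hmax)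
  calc lam * ∑ i, y i ^ k = ∑ i, y i * (lam * y i ^ (k - 1)) := by
        rw [mul_sum]
        refine sum_congr rfl fun i _ => ?_
        rw [← mul_pow_sub_one (show k ≠ 0 by omega) (y i)]
        ring
    _ ≤ ∑ i, y i * linkForm E i y := sum_le_sum fun i _ => mul_le_mul_of_nonneg_left (h i) (hy i)
    _ = k * edgeForm E y := sum_mul_linkForm hcard y
    _ ≤ k * (edgeForm E x * ∑ i, y i ^ k) := by gcongr; exact hmax y hy
    _ = k * edgeForm E x * ∑ i, y i ^ k := by ring

lemma card_filter_notMem_add_card_filter_mem (u v : Fin n) :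
    #{e ∈ E | u ∈ e ∧ v ∉ e} + #{e ∈ E | u ∈ e ∧ v ∈ e} = hDeg n E u := by
  rw [hDeg, ← card_filter_add_card_filter_not (s := E.filter (u ∈ ·)) (v ∉ ·), filter_filter,
    filter_filter]
  simp only [not_not]

lemma mul_pow_le_linkForm (hcard : ∀ e ∈ E, #e = k) {e : Finset (Fin n)} (he : e ∈ E)
    {w : Fin n} (hw : w ∈ e) {t : Finset (Fin n)} (ht : t ⊆ e.erase w) {y : Fin n → ℝ}
    (hy : 0 ≤ y) {c lam : ℝ} (hc : 0 ≤ c) (hcy : ∀ j ∈ e.erase w \ t, c ≤ y j)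
    (hlam : lam * c ^ #t ≤ ∏ j ∈ t, y j) :
    lam * c ^ (k - 1) ≤ linkForm E w y := by
  have hk : k - 1 = #t + #(e.erase w \ t) := by
    rw [add_comm, card_sdiff_add_card_eq_card ht, card_erase_of_mem hw, hcard e he]
  calc lam * c ^ (k - 1) = lam * c ^ #t * c ^ #(e.erase w \ t) := by rw [hk, pow_add, mul_assoc]
    _ ≤ (∏ j ∈ t, y j) * c ^ #(e.erase w \ t) := by gcongr
    _ ≤ ∏ j ∈ e.erase w, y j := prod_mul_pow_card_sdiff_le_prod ht hc (fun j _ => hy j) hcy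
    _ ≤ linkForm E w y := single_le_sum (f := fun e => ∏ j ∈ e.erase w, y j)
        (fun _ _ => prod_nonneg fun j _ => hy j) (mem_filter.2 ⟨he, hw⟩)

lemma le_linkForm_of_forall_le (hcard : ∀ e ∈ E, #e = k) {u v : Fin n} (huv : u ≠ v)
    {y : Fin n → ℝ} (hy : 0 ≤ y) {p q : ℝ} (hp : 0 ≤ p) (hq : 0 ≤ q)
    (hyp : ∀ e ∈ E, u ∈ e → v ∉ e → ∀ j ∈ e, j ≠ u → p ≤ y j)
    (hyq : ∀ e ∈ E, u ∈ e → v ∈ e → ∀ j ∈ e, j ≠ u → j ≠ v → q ≤ y j) :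
    #{e ∈ E | u ∈ e ∧ v ∉ e} * p ^ (k - 1) + #{e ∈ E | u ∈ e ∧ v ∈ e} * (y v * q ^ (k - 2))
      ≤ linkForm E u y := by
  rw [linkForm, ← sum_filter_not_add_sum_filter _ (v ∈ ·), filter_filter, filter_filter,
    ← nsmul_eq_mul, ← nsmul_eq_mul]
  refine add_le_add (card_nsmul_le_sum _ _ _ fun e he => ?_)
    (card_nsmul_le_sum _ _ _ fun e he => ?_)
  · obtain ⟨heE, hue, hve⟩ := mem_filter.1 he
    simpa [card_erase_of_mem hue, hcard e heE] using
      prod_mul_pow_card_sdiff_le_prod (empty_subset (e.erase u)) hp (by simp)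
        fun j hj => hyp e heE hue hve j (by simp_all) (by simp_all)
  · obtain ⟨heE, hue, hve⟩ := mem_filter.1 he
    have hv : {v} ⊆ e.erase u := singleton_subset_iff.2 (mem_erase.2 ⟨huv.symm, hve⟩)
    have hcard' : #(e.erase u \ {v}) = k - 2 := by
      rw [card_sdiff_of_subset hv, card_erase_of_mem hue, hcard e heE, card_singleton]; omega
    simpa [hcard'] using prod_mul_pow_card_sdiff_le_prod hv hq (by simpa using hy v)
      fun j hj => hyq e heE hue hve j (by simp_all) (by simp_all) (by simp_all)

section TestVector

variable {u v w : Fin n} {a b p q s : ℝ}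

noncomputable def pairTestVector (E : Finset (Finset (Fin n))) (u v : Fin n) (a b p q s : ℝ) :
    Fin n → ℝ := fun w =>
  if w = u then a else if w = v then b else
    max (max (if ∃ e ∈ E, u ∈ e ∧ v ∉ e ∧ w ∈ e then p else 0)
      (if ∃ e ∈ E, u ∈ e ∧ v ∈ e ∧ w ∈ e then q else 0))
      (if ∃ e ∈ E, v ∈ e ∧ u ∉ e ∧ w ∈ e then s else 0)

lemma pairTestVector_left : pairTestVector E u v a b p q s u = a := if_pos rfl

lemma pairTestVector_right (huv : u ≠ v) : pairTestVector E u v a b p q s v = b := by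
  simp [pairTestVector, huv.symm]

lemma pairTestVector_of_ne (hu : w ≠ u) (hv : w ≠ v) : pairTestVector E u v a b p q s w =
    max (max (if ∃ e ∈ E, u ∈ e ∧ v ∉ e ∧ w ∈ e then p else 0)
      (if ∃ e ∈ E, u ∈ e ∧ v ∈ e ∧ w ∈ e then q else 0))
      (if ∃ e ∈ E, v ∈ e ∧ u ∉ e ∧ w ∈ e then s else 0) := by
  simp [pairTestVector, hu, hv]

lemma pairTestVector_nonneg (ha : 0 ≤ a) (hb : 0 ≤ b) (hp : 0 ≤ p) (hq : 0 ≤ q) (hs : 0 ≤ s) :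
    0 ≤ pairTestVector E u v a b p q s := fun w => by
  unfold pairTestVector
  split_ifs <;> simp_all

lemma le_pairTestVector_of_left_only {e : Finset (Fin n)} (he : e ∈ E) (hue : u ∈ e) (hve : v ∉ e)
    (hwe : w ∈ e) (hwu : w ≠ u) : p ≤ pairTestVector E u v a b p q s w := by
  have hex : ∃ e ∈ E, u ∈ e ∧ v ∉ e ∧ w ∈ e := ⟨e, he, hue, hve, hwe⟩
  rw [pairTestVector_of_ne hwu (ne_of_mem_of_not_mem hwe hve), if_pos hex]
  exact (le_max_left _ _).trans (le_max_left _ _)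

lemma le_pairTestVector_of_both {e : Finset (Fin n)} (he : e ∈ E) (hue : u ∈ e) (hve : v ∈ e)
    (hwe : w ∈ e) (hwu : w ≠ u) (hwv : w ≠ v) : q ≤ pairTestVector E u v a b p q s w := by
  have hex : ∃ e ∈ E, u ∈ e ∧ v ∈ e ∧ w ∈ e := ⟨e, he, hue, hve, hwe⟩
  rw [pairTestVector_of_ne hwu hwv, if_pos hex]
  exact (le_max_right _ _).trans (le_max_left _ _)

lemma le_pairTestVector_of_right_only {e : Finset (Fin n)} (he : e ∈ E) (hve : v ∈ e)
    (hue : u ∉ e) (hwe : w ∈ e) (hwv : w ≠ v) : s ≤ pairTestVector E u v a b p q s w := by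
  have hex : ∃ e ∈ E, v ∈ e ∧ u ∉ e ∧ w ∈ e := ⟨e, he, hve, hue, hwe⟩
  rw [pairTestVector_of_ne (ne_of_mem_of_not_mem hwe hue) hwv, if_pos hex]
  exact le_max_right _ _

lemma mul_ite_pow_le_linkForm (hk : 2 ≤ k) {y : Fin n → ℝ} (hy : 0 ≤ y) {P : Prop} [Decidable P]
    {c lam : ℝ} (h : P → lam * c ^ (k - 1) ≤ linkForm E w y) :
    lam * (if P then c else 0) ^ (k - 1) ≤ linkForm E w y := by
  split_ifs with hP
  · exact h hP
  · rw [zero_pow (by omega), mul_zero]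
    exact linkForm_nonneg hy w

lemma mul_pow_pairTestVector_le_linkForm (hk : 2 ≤ k) (hcard : ∀ e ∈ E, #e = k) (huv : u ≠ v)
    (ha : 0 ≤ a) (hb : 0 ≤ b) (hp : 0 ≤ p) (hq : 0 ≤ q) (hs : 0 ≤ s) {lam : ℝ}
    (hpa : lam * p ≤ a) (hqab : lam * q ^ 2 ≤ a * b) (hsb : lam * s ≤ b)
    (hwu : w ≠ u) (hwv : w ≠ v) :
    lam * pairTestVector E u v a b p q s w ^ (k - 1) ≤
      linkForm E w (pairTestVector E u v a b p q s) := by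
  have hy := pairTestVector_nonneg (E := E) (u := u) (v := v) ha hb hp hq hs
  have hP := mul_ite_pow_le_linkForm (P := ∃ e ∈ E, u ∈ e ∧ v ∉ e ∧ w ∈ e) hk hy
    fun ⟨e, he, hue, hve, hwe⟩ => mul_pow_le_linkForm hcard he hwe (t := {u})
      (singleton_subset_iff.2 (mem_erase.2 ⟨hwu.symm, hue⟩)) hy hp
      (fun j hj => by
        simp only [mem_sdiff, mem_erase, mem_singleton] at hj
        exact le_pairTestVector_of_left_only he hue hve hj.1.2 hj.2)
      (by simpa [pairTestVector_left] using hpa)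
  have hQ := mul_ite_pow_le_linkForm (P := ∃ e ∈ E, u ∈ e ∧ v ∈ e ∧ w ∈ e) hk hy
    fun ⟨e, he, hue, hve, hwe⟩ => mul_pow_le_linkForm hcard he hwe (t := {u, v})
      (insert_subset_iff.2 ⟨mem_erase.2 ⟨hwu.symm, hue⟩,
        singleton_subset_iff.2 (mem_erase.2 ⟨hwv.symm, hve⟩)⟩) hy hq
      (fun j hj => by
        simp only [mem_sdiff, mem_erase, mem_insert, mem_singleton, not_or] at hj
        exact le_pairTestVector_of_both he hue hve hj.1.2 hj.2.1 hj.2.2)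
      (by simpa [pairTestVector_left, pairTestVector_right huv, huv] using hqab)
  have hR := mul_ite_pow_le_linkForm (P := ∃ e ∈ E, v ∈ e ∧ u ∉ e ∧ w ∈ e) hk hy
    fun ⟨e, he, hve, hue, hwe⟩ => mul_pow_le_linkForm hcard he hwe (t := {v})
      (singleton_subset_iff.2 (mem_erase.2 ⟨hwv.symm, hve⟩)) hy hs
      (fun j hj => by
        simp only [mem_sdiff, mem_erase, mem_singleton] at hj
        exact le_pairTestVector_of_right_only he hve hue hj.1.2 hj.2)
      (by simpa [pairTestVector_right huv] using hsb)
  rw [pairTestVector_of_ne hwu hwv]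
  let bound := fun r => lam * r ^ (k - 1) ≤ linkForm E w (pairTestVector E u v a b p q s)
  exact max_rec' bound (max_rec' bound hP hQ) hR

theorem le_specRad_of_adjacent (hk : 2 ≤ k) (hcard : ∀ e ∈ E, #e = k) (huv : u ≠ v)
    {lam a b p q s : ℝ} (ha : 0 < a) (hb : 0 ≤ b) (hp : 0 ≤ p) (hq : 0 ≤ q) (hs : 0 ≤ s)
    (hpa : lam * p ≤ a) (hqab : lam * q ^ 2 ≤ a * b) (hsb : lam * s ≤ b)
    (hu : lam * a ^ (k - 1) ≤
      #{e ∈ E | u ∈ e ∧ v ∉ e} * p ^ (k - 1) + #{e ∈ E | u ∈ e ∧ v ∈ e} * (b * q ^ (k - 2)))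
    (hv : lam * b ^ (k - 1) ≤
      #{e ∈ E | v ∈ e ∧ u ∉ e} * s ^ (k - 1) + #{e ∈ E | u ∈ e ∧ v ∈ e} * (a * q ^ (k - 2))) :
    lam ≤ specRad n k (adjT n k E) := by
  have hy := pairTestVector_nonneg (E := E) (u := u) (v := v) ha.le hb hp hq hs
  refine le_specRad_of_le_linkForm hk hcard hy (fun h => ?_) fun w => ?_
  · exact ha.ne' (pairTestVector_left.symm.trans (congrFun h u))
  by_cases hwu : w = u
  · subst w
    rw [pairTestVector_left]
    refine hu.trans ?_
    have := le_linkForm_of_forall_le hcard huv hy hp hq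
      (fun e he hue hve j hj hju => le_pairTestVector_of_left_only he hue hve hj hju)
      (fun e he hue hve j hj hju hjv => le_pairTestVector_of_both he hue hve hj hju hjv)
    rwa [pairTestVector_right huv] at this
  by_cases hwv : w = v
  · subst w
    rw [pairTestVector_right huv]
    refine hv.trans ?_
    have := le_linkForm_of_forall_le hcard huv.symm hy hs hq
      (fun e he hve hue j hj hjv => le_pairTestVector_of_right_only he hve hue hj hjv)
      (fun e he hve hue j hj hjv hju => le_pairTestVector_of_both he hue hve hj hju hjv)
    have hcomm : #{e ∈ E | v ∈ e ∧ u ∈ e} = #{e ∈ E | u ∈ e ∧ v ∈ e} :=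
      congrArg card (filter_congr fun _ _ => and_comm)
    rwa [pairTestVector_left, hcomm] at this
  exact mul_pow_pairTestVector_le_linkForm hk hcard huv ha.le hb hp hq hs hpa hqab hsb hwu hwv

theorem rpow_le_specRad_of_adjacent (hk : 2 ≤ k) (hcard : ∀ e ∈ E, #e = k) (huv : u ≠ v)
    (hγ : 0 < #{e ∈ E | u ∈ e ∧ v ∈ e}) {t : ℝ} (ht : (#{e ∈ E | u ∈ e ∧ v ∉ e} : ℝ) < t)
    (hroot : (t - #{e ∈ E | u ∈ e ∧ v ∉ e}) * (t - #{e ∈ E | v ∈ e ∧ u ∉ e}) =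
      (#{e ∈ E | u ∈ e ∧ v ∈ e} : ℝ) ^ 2 * t) :
    t ^ ((1 : ℝ) / k) ≤ specRad n k (adjT n k E) := by
  obtain ⟨m, rfl⟩ : ∃ m, k = m + 2 := ⟨k - 2, by omega⟩
  set A : ℝ := ((#{e ∈ E | u ∈ e ∧ v ∉ e} : ℕ) : ℝ)
  set B : ℝ := ((#{e ∈ E | v ∈ e ∧ u ∉ e} : ℕ) : ℝ)
  set g : ℝ := ((#{e ∈ E | u ∈ e ∧ v ∈ e} : ℕ) : ℝ)
  have hg : 0 < g := Nat.cast_pos.2 hγ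
  have htpos : 0 < t := (Nat.cast_nonneg _).trans_lt ht
  rw [one_div]
  set lam := t ^ ((↑(m + 2) : ℝ)⁻¹)
  have hlam : lam ^ (m + 2) = t := Real.rpow_inv_natCast_pow htpos.le (by omega)
  have hlampos : 0 < lam := by positivity
  set c := (t - A) / (g * t)
  have hc : 0 < c := div_pos (by linarith) (by positivity)
  set q := c ^ ((↑(m + 2) : ℝ)⁻¹)
  have hqc : q ^ (m + 2) = c := Real.rpow_inv_natCast_pow hc.le (by omega)
  have hq : 0 < q := by positivity
  have hcA : g * c = (t - A) / t := by simp only [c]; field_simp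
  have hcB : (t - B) * c = g := by simp only [c]; field_simp; linear_combination hroot
  refine le_specRad_of_adjacent hk hcard huv (a := 1) (b := lam * q ^ 2) (p := lam⁻¹) (q := q)
    (s := q ^ 2) one_pos (by positivity) (by positivity) hq.le (by positivity)
    (by rw [mul_inv_cancel₀ hlampos.ne']) (by rw [one_mul]) le_rfl ?_ ?_ <;>
    rw [show m + 2 - 1 = m + 1 by omega, show m + 2 - 2 = m by omega] <;> refine le_of_eq ?_
  · calc lam * 1 ^ (m + 1) = A * lam⁻¹ ^ (m + 1) + lam * (g * c) := by
          rw [hcA, ← hlam, inv_pow]; field_simp; ring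
      _ = A * lam⁻¹ ^ (m + 1) + g * (lam * q ^ 2 * q ^ m) := by rw [← hqc]; ring
  · calc lam * (lam * q ^ 2) ^ (m + 1) = q ^ m * (lam ^ (m + 2) * q ^ (m + 2)) := by ring
      _ = q ^ m * (B * c + g) := by rw [hlam, hqc, ← hcB]; ring
      _ = B * (q ^ 2) ^ (m + 1) + g * (1 * q ^ m) := by rw [← hqc]; ring

end TestVector

end

theorem stmt8_general (n k : ℕ) (hk : 2 ≤ k)
    (E : Finset (Finset (Fin n))) (hcard : ∀ e ∈ E, e.card = k)
    (u v : Fin n) (Δ δ γ : ℕ)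
    (hdu : hDeg n E u = Δ)
    (hvu : v ≠ u) (hnbr : ∃ e ∈ E, u ∈ e ∧ v ∈ e)
    (hdv : hDeg n E v = δ)
    (hγ : (E.filter (fun e => u ∈ e ∧ v ∈ e)).card = γ) :
    (((Δ : ℝ) + δ - 2*γ + γ^2 +
        Real.sqrt (((Δ : ℝ) - δ)^2 + (γ : ℝ)^4 + 2*((Δ : ℝ) + δ - 2*γ)*γ^2)) / 2)
        ^ ((1 : ℝ)/k)
      ≤ specRad n k (adjT n k E) := by
  obtain ⟨e₀, he₀, hue₀, hve₀⟩ := hnbr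
  have hγpos : 0 < #{e ∈ E | u ∈ e ∧ v ∈ e} := card_pos.2 ⟨e₀, mem_filter.2 ⟨he₀, hue₀, hve₀⟩⟩
  set A : ℝ := ((#{e ∈ E | u ∈ e ∧ v ∉ e} : ℕ) : ℝ)
  set B : ℝ := ((#{e ∈ E | v ∈ e ∧ u ∉ e} : ℕ) : ℝ)
  have hA : A = Δ - γ := by
    rw [← hdu, ← hγ, ← card_filter_notMem_add_card_filter_mem u v]; push_cast; ring
  have hB : B = δ - γ := by
    rw [← hdv, ← hγ, ← card_filter_notMem_add_card_filter_mem v u,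
      filter_congr fun e _ => (and_comm : v ∈ e ∧ u ∈ e ↔ _)]
    push_cast; ring
  rw [show (Δ : ℝ) + δ - 2 * γ = A + B by rw [hA, hB]; ring,
    show (Δ : ℝ) - δ = A - B by rw [hA, hB]; ring, ← hγ]
  obtain ⟨hroot, hlt⟩ := sub_mul_sub_eq_and_lt_of_eq_root (Nat.cast_nonneg _) (Nat.cast_nonneg _)
    (Nat.cast_pos.2 hγpos) rfl
  exact rpow_le_specRad_of_adjacent hk hcard hvu.symm hγpos hlt hroot

/-- Let `G` be a `k`-uniform hypergraph with a vertex `u` of maximum degree `Δ ≥ 1`, let `v`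
be a neighbor of `u` of maximum degree `δ` among the neighbors of `u`, and let `γ` be the
number of edges containing both `u` and `v`. Then
`ρ(G) ≥ ((Δ + δ − 2γ + γ² + √((Δ−δ)² + γ⁴ + 2(Δ+δ−2γ)γ²))/2)^{1/k}`. -/
theorem stmt8 (n k : ℕ) (hk : 2 ≤ k) (hkn : k ≤ n)
    (E : Finset (Finset (Fin n))) (hcard : ∀ e ∈ E, e.card = k)
    (u v : Fin n) (Δ δ γ : ℕ)
    (hdu : hDeg n E u = Δ) (hΔ1 : 1 ≤ Δ) (hΔmax : ∀ w : Fin n, hDeg n E w ≤ Δ)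
    (hvu : v ≠ u) (hnbr : ∃ e ∈ E, u ∈ e ∧ v ∈ e)
    (hdv : hDeg n E v = δ)
    (hδmax : ∀ w : Fin n, w ≠ u → (∃ e ∈ E, u ∈ e ∧ w ∈ e) → hDeg n E w ≤ δ)
    (hγ : (E.filter (fun e => u ∈ e ∧ v ∈ e)).card = γ) :
    (((Δ : ℝ) + δ - 2*γ + γ^2 +
        Real.sqrt (((Δ : ℝ) - δ)^2 + (γ : ℝ)^4 + 2*((Δ : ℝ) + δ - 2*γ)*γ^2)) / 2)
        ^ ((1 : ℝ)/k)
      ≤ specRad n k (adjT n k E) :=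
  stmt8_general n k hk E hcard u v Δ δ γ hdu hvu hnbr hdv hγ
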